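/- Brezis–Lieb splitting for the F₁-modular: let (uₙ) be a sequence of measurable functions ℝ³ → ℝ and u : ℝ³ → ℝ measurable such that uₙ(x) → u(x) for a.e. x ∈ ℝ³ (with respect to Lebesgue measure), each function x ↦ F₁(uₙ(x)) is integrable, and sup_n ∫_{ℝ³} F₁(uₙ) dx < ∞. Then x ↦ F₁(u(x)) is integrable and ∫_{ℝ³} F₁(uₙ) dx − ∫_{ℝ³} F₁(uₙ − u) dx → ∫_{ℝ³} F₁(u) dx as n → ∞. -/

import Mathlib

/-!
On `(0, ∞)` the function `F₁` satisfies `F₁(s) ≤ s F₁'(s) ≤ 3 F₁(s)`, so `F₁(s)/s` increases and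
`F₁(s)/s³` decreases; with evenness, the mean value theorem turns this into the Brezis–Lieb
inequality `|F₁(a + b) - F₁(a)| ≤ ε F₁(a) + C_ε F₁(b)`. Given that inequality, Fatou's lemma makes
`F₁(u)` integrable, `F₁(uₙ - u)` has bounded integrals, and dominated convergence applied to
`(|F₁(uₙ) - F₁(uₙ - u) - F₁(u)| - ε F₁(uₙ - u))⁺` shows that the defect is eventually `O(ε)`.
-/

open Real Filter

noncomputable def F1 (δ₀ s : ℝ) : ℝ :=
  if s = 0 then 0
  else if |s| < δ₀ then -(1/2) * s^2 * Real.log (s^2)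
  else -(1/2) * s^2 * (Real.log (δ₀^2) + 3) + 2*δ₀*|s| - δ₀^2/2

noncomputable def F1' (δ₀ s : ℝ) : ℝ :=
  if s = 0 then 0
  else if |s| < δ₀ then -(Real.log (s^2) + 1) * s
  else -(Real.log (δ₀^2) + 3) * s + 2*δ₀*(Real.sign s)

noncomputable def F2 (δ₀ s : ℝ) : ℝ :=
  if |s| < δ₀ then 0
  else (1/2) * s^2 * Real.log (s^2/δ₀^2) + 2*δ₀*|s| - (3/2)*s^2 - δ₀^2/2

noncomputable def F2' (δ₀ s : ℝ) : ℝ :=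
  if |s| < δ₀ then 0
  else s * Real.log (s^2/δ₀^2) - 2*s + 2*δ₀*(Real.sign s)

open MeasureTheory

open Set

section Growth

variable {F F' : ℝ → ℝ}

theorem mul_le_mul_of_le_mul_deriv (hF : ∀ s, 0 < s → HasDerivAt F (F' s) s)
    (hlow : ∀ s, 0 < s → F s ≤ s * F' s) {t m : ℝ} (ht : 0 < t) (htm : t ≤ m) :
    m * F t ≤ t * F m := by
  have hmono : MonotoneOn (fun s => F s / s) (Ioi 0) := by
    refine monotoneOn_of_hasDerivWithinAt_nonneg (f' := fun s => (F' s * s - F s * 1) / s ^ 2)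
      (convex_Ioi 0) (fun s hs => ?_) (fun s hs => ?_) (fun s hs => ?_)
    · exact ((hF s hs).div (hasDerivAt_id s) (ne_of_gt hs)).continuousAt.continuousWithinAt
    · rw [interior_Ioi] at hs
      exact ((hF s hs).div (hasDerivAt_id s) (ne_of_gt hs)).hasDerivWithinAt
    · rw [interior_Ioi] at hs
      have := hlow s hs
      exact div_nonneg (by nlinarith) (sq_nonneg s)
  have h := hmono ht (ht.trans_le htm) htm
  rw [div_le_div_iff₀ ht (ht.trans_le htm)] at h
  linarith

theorem pow_mul_le_pow_mul_of_mul_deriv_le {p : ℕ} (hF : ∀ s, 0 < s → HasDerivAt F (F' s) s)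
    (hup : ∀ s, 0 < s → s * F' s ≤ p * F s) {t m : ℝ} (ht : 0 < t) (htm : t ≤ m) :
    t ^ p * F m ≤ m ^ p * F t := by
  have hanti : AntitoneOn (fun s => F s / s ^ p) (Ioi 0) := by
    refine antitoneOn_of_hasDerivWithinAt_nonpos
      (f' := fun s => (F' s * s ^ p - F s * (p * s ^ (p - 1))) / (s ^ p) ^ 2)
      (convex_Ioi 0) (fun s hs => ?_) (fun s hs => ?_) (fun s hs => ?_)
    · exact ((hF s hs).div (hasDerivAt_pow p s) (pow_ne_zero p (ne_of_gt hs))).continuousAt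
        |>.continuousWithinAt
    · rw [interior_Ioi] at hs
      exact ((hF s hs).div (hasDerivAt_pow p s) (pow_ne_zero p (ne_of_gt hs))).hasDerivWithinAt
    · rw [interior_Ioi] at hs
      have hpow : s * (p * s ^ (p - 1)) = p * s ^ p := by
        cases p <;> simp [pow_succ]; ring
      have hnum : s * (F' s * s ^ p - F s * (p * s ^ (p - 1))) ≤ 0 := by
        have := mul_le_mul_of_nonneg_right (hup s hs) (pow_nonneg hs.le p)
        linear_combination this - F s * hpow
      exact div_nonpos_of_nonpos_of_nonneg (nonpos_of_mul_nonpos_right hnum hs) (sq_nonneg _)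
  have h := hanti ht (ht.trans_le htm) htm
  rw [div_le_div_iff₀ (pow_pos (ht.trans_le htm) p) (pow_pos ht p)] at h
  linarith

end Growth

structure PowerLikeGrowth (F F' : ℝ → ℝ) (p : ℕ) : Prop where
  continuous : Continuous F
  even : ∀ s, F (-s) = F s
  nonneg : ∀ s, 0 ≤ F s
  hasDerivAt : ∀ s, 0 < s → HasDerivAt F (F' s) s
  le_mul_deriv : ∀ s, 0 < s → F s ≤ s * F' s
  mul_deriv_le : ∀ s, 0 < s → s * F' s ≤ p * F s

structure BrezisLiebCondition (F : ℝ → ℝ) : Prop where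
  continuous : Continuous F
  nonneg : ∀ s, 0 ≤ F s
  map_zero : F 0 = 0
  abs_add_sub_le : ∀ ε > 0, ∃ C, 0 ≤ C ∧ ∀ a b, |F (a + b) - F a| ≤ ε * F a + C * F b

namespace PowerLikeGrowth

variable {F F' : ℝ → ℝ} {p : ℕ}

theorem map_abs (hG : PowerLikeGrowth F F' p) (s : ℝ) : F |s| = F s := by
  rcases abs_choice s with h | h <;> rw [h]
  exact hG.even s

theorem monotoneOn (hG : PowerLikeGrowth F F' p) : MonotoneOn F (Ici 0) := by
  refine monotoneOn_of_hasDerivWithinAt_nonneg (convex_Ici 0) hG.continuous.continuousOn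
    (fun s hs => ?_) (fun s hs => ?_) (f' := F') <;> rw [interior_Ici] at hs
  · exact (hG.hasDerivAt s hs).hasDerivWithinAt
  · exact nonneg_of_mul_nonneg_right ((hG.nonneg s).trans (hG.le_mul_deriv s hs)) hs

theorem map_mul_le (hG : PowerLikeGrowth F F' p) {l s : ℝ} (hl : 1 ≤ l) (hs : 0 ≤ s) :
    F (l * s) ≤ l ^ p * F s := by
  rcases hs.eq_or_lt with rfl | hs
  · simpa using le_mul_of_one_le_left (hG.nonneg 0) (one_le_pow₀ hl)
  have h := pow_mul_le_pow_mul_of_mul_deriv_le hG.hasDerivAt hG.mul_deriv_le hs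
    (le_mul_of_one_le_left hs.le hl)
  rw [mul_pow, mul_assoc, mul_left_comm] at h
  exact le_of_mul_le_mul_left h (pow_pos hs p)

theorem mul_sub_le_of_le (hG : PowerLikeGrowth F F' p) {x y : ℝ} (hy : 0 ≤ y) (hyx : y ≤ x) :
    x * (F x - F y) ≤ p * (x - y) * F x := by
  rcases hyx.eq_or_lt with rfl | hyx
  · simp
  obtain ⟨ξ, ⟨hyξ, hξx⟩, hξ⟩ := exists_hasDerivAt_eq_slope F F' hyx hG.continuous.continuousOn
    (fun ξ hξ => hG.hasDerivAt ξ (hy.trans_lt hξ.1))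
  have hξ0 : 0 < ξ := hy.trans_lt hyξ
  have hdiff : F x - F y = F' ξ * (x - y) := by
    rw [hξ, div_mul_cancel₀ _ (sub_pos.2 hyx).ne']
  -- `ξ F'(ξ) ≤ p F(ξ)` and `x F(ξ) ≤ ξ F(x)` together give `x F'(ξ) ≤ p F(x)`.
  have hratio := mul_le_mul_of_le_mul_deriv hG.hasDerivAt hG.le_mul_deriv hξ0 hξx.le
  have hslope : x * F' ξ ≤ p * F x := by
    refine le_of_mul_le_mul_left ?_ hξ0
    nlinarith [hG.mul_deriv_le ξ hξ0, (Nat.cast_nonneg p : (0 : ℝ) ≤ p)]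
  rw [hdiff]
  nlinarith [sub_pos.2 hyx]

theorem max_mul_abs_sub_le (hG : PowerLikeGrowth F F' p) (x y : ℝ) :
    max |x| |y| * |F x - F y| ≤ p * |x - y| * F (max |x| |y|) := by
  wlog h : |y| ≤ |x| generalizing x y
  · simpa only [max_comm, abs_sub_comm] using this y x (le_of_not_ge h)
  have hFx : 0 ≤ F x := hG.nonneg x
  have hmono : F y ≤ F x := by
    simpa only [hG.map_abs] using hG.monotoneOn (abs_nonneg y) (abs_nonneg x) h
  have hbound := hG.mul_sub_le_of_le (abs_nonneg y) h
  rw [hG.map_abs, hG.map_abs] at hbound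
  rw [max_eq_left h, hG.map_abs, abs_of_nonneg (sub_nonneg.2 hmono)]
  refine hbound.trans (mul_le_mul_of_nonneg_right ?_ hFx)
  exact mul_le_mul_of_nonneg_left (abs_sub_abs_le_abs_sub x y) (Nat.cast_nonneg p)

theorem map_max_abs_le (hG : PowerLikeGrowth F F' p) (a b : ℝ) :
    F (max |a + b| |a|) ≤ 2 ^ p * (F a + F b) := by
  have hM : 0 ≤ max |a| |b| := le_max_of_le_left (abs_nonneg a)
  have hm : max |a + b| |a| ≤ 2 * max |a| |b| :=
    max_le (by linarith [abs_add_le a b, le_max_left |a| |b|, le_max_right |a| |b|])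
      (by linarith [le_max_left |a| |b|])
  have hFM : F (max |a| |b|) ≤ F a + F b := by
    rcases max_choice |a| |b| with h | h <;> rw [h, hG.map_abs]
    · linarith [hG.nonneg b]
    · linarith [hG.nonneg a]
  calc F (max |a + b| |a|) ≤ F (2 * max |a| |b|) :=
        hG.monotoneOn (le_max_of_le_right (abs_nonneg a)) (by simp only [mem_Ici]; linarith) hm
    _ ≤ 2 ^ p * F (max |a| |b|) := hG.map_mul_le one_le_two hM
    _ ≤ 2 ^ p * (F a + F b) := by gcongr

theorem abs_add_sub_le (hG : PowerLikeGrowth F F' p) {η : ℝ} (hη : 0 < η) (hη1 : η ≤ 1)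
    (a b : ℝ) :
    |F (a + b) - F a| ≤ p * η * 2 ^ p * (F a + F b) + 2 * p * η⁻¹ ^ p * F b := by
  set m := max |a + b| |a|
  have hp : (0 : ℝ) ≤ p := Nat.cast_nonneg p
  have hFa := hG.nonneg a
  have hFb := hG.nonneg b
  have hFm := hG.nonneg m
  have hm0 : 0 ≤ m := le_max_of_le_right (abs_nonneg a)
  have hmain : m * |F (a + b) - F a| ≤ p * |b| * F m := by
    simpa using hG.max_mul_abs_sub_le (a + b) a
  have hbm : |b| ≤ 2 * m := by
    have := abs_sub (a + b) a
    rw [add_sub_cancel_left] at this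
    linarith [le_max_left |a + b| |a|, le_max_right |a + b| |a|]
  rcases hm0.eq_or_lt with hm0 | hm0
  · have hb : b = 0 := abs_eq_zero.1 (le_antisymm (by linarith) (abs_nonneg b))
    subst hb
    rw [add_zero, sub_self, abs_zero]
    exact add_nonneg (mul_nonneg (by positivity) (add_nonneg hFa hFb))
      (mul_nonneg (by positivity) hFb)
  by_cases hsmall : |b| ≤ η * m
  · -- `b` is small compared with `a`: the error is a small multiple of `F m ≲ F a + F b`.
    have h1 : |F (a + b) - F a| ≤ p * η * F m := by
      refine le_of_mul_le_mul_left ?_ hm0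
      nlinarith [mul_le_mul_of_nonneg_left hsmall (mul_nonneg hp hFm)]
    have h2 := mul_le_mul_of_nonneg_left (hG.map_max_abs_le a b) (mul_nonneg hp hη.le)
    have h3 : 0 ≤ 2 * p * η⁻¹ ^ p * F b := by positivity
    linarith
  · -- `b` dominates: `m < |b| / η`, so `F m ≤ η⁻ᵖ F b`.
    have h1 : |F (a + b) - F a| ≤ 2 * p * F m := by
      refine le_of_mul_le_mul_left ?_ hm0
      nlinarith [mul_le_mul_of_nonneg_left hbm (mul_nonneg hp hFm)]
    have hmb : m ≤ η⁻¹ * |b| := by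
      rw [inv_mul_eq_div, le_div_iff₀ hη]; linarith
    have h2 : F m ≤ η⁻¹ ^ p * F b := by
      rw [← hG.map_abs b]
      exact (hG.monotoneOn hm0.le (mem_Ici.2 (by positivity)) hmb).trans
        (hG.map_mul_le (one_le_inv₀ hη |>.2 hη1) (abs_nonneg b))
    have h3 : 0 ≤ p * η * 2 ^ p * (F a + F b) := by positivity
    nlinarith

theorem brezisLiebCondition (hG : PowerLikeGrowth F F' p) (h0 : F 0 = 0) :
    BrezisLiebCondition F where
  continuous := hG.continuous
  nonneg := hG.nonneg
  map_zero := h0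
  abs_add_sub_le ε hε := by
    set η := min 1 (ε / (p * 2 ^ p + 1))
    have hη : 0 < η := lt_min one_pos (by positivity)
    have hcoef : p * η * 2 ^ p ≤ ε := by
      have hK : (0 : ℝ) ≤ p * 2 ^ p := by positivity
      calc p * η * 2 ^ p = (p * 2 ^ p) * η := by ring
        _ ≤ (p * 2 ^ p) * (ε / (p * 2 ^ p + 1)) := by gcongr; exact min_le_right _ _
        _ ≤ ε := by
          rw [mul_div_assoc', div_le_iff₀ (by positivity)]
          nlinarith
    refine ⟨ε + 2 * p * η⁻¹ ^ p, by positivity, fun a b => ?_⟩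
    have := hG.abs_add_sub_le hη (min_le_left _ _) a b
    nlinarith [hG.nonneg a, hG.nonneg b]

end PowerLikeGrowth

section BrezisLieb

variable {α : Type*} [MeasurableSpace α] {μ : Measure α}

theorem integrable_of_tendsto_of_integral_le {g : ℕ → α → ℝ} {f : α → ℝ}
    (hg : ∀ n, Integrable (g n) μ) (hg_nonneg : ∀ n, 0 ≤ᵐ[μ] g n) {C : ℝ}
    (hC : ∀ n, ∫ x, g n x ∂μ ≤ C)
    (hlim : ∀ᵐ x ∂μ, Tendsto (fun n => g n x) atTop (nhds (f x))) : Integrable f μ := by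
  refine memLp_one_iff_integrable.1
    ⟨aestronglyMeasurable_of_tendsto_ae _ (fun n => (hg n).1) hlim, ?_⟩
  refine (Lp.eLpNorm_le_of_ae_tendsto (C := ENNReal.ofReal C) (Eventually.of_forall fun n => ?_)
    (fun n => (hg n).1) hlim).trans_lt ENNReal.ofReal_lt_top
  rw [eLpNorm_one_eq_lintegral_enorm, ← ofReal_integral_norm_eq_lintegral_enorm (hg n)]
  refine ENNReal.ofReal_le_ofReal ((integral_congr_ae ?_).trans_le (hC n))
  filter_upwards [hg_nonneg n] with x hx using Real.norm_of_nonneg hx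

namespace BrezisLiebCondition

variable {F : ℝ → ℝ}

theorem exists_map_sub_le (hF : BrezisLiebCondition F) :
    ∃ C, ∀ a b, F (a - b) ≤ 2 * F a + C * F b := by
  obtain ⟨C, -, hC⟩ := hF.abs_add_sub_le (1 / 2) one_half_pos
  refine ⟨2 * C, fun a b => ?_⟩
  have h := hC (a - b) b
  rw [sub_add_cancel] at h
  linarith [neg_le_abs (F a - F (a - b))]

theorem eventually_integral_abs_sub_le (hF : BrezisLiebCondition F) {u : ℕ → α → ℝ}
    {v : α → ℝ} (hae : ∀ᵐ x ∂μ, Tendsto (fun n => u n x) atTop (nhds (v x)))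
    (hu_int : ∀ n, Integrable (fun x => F (u n x)) μ)
    (hw_int : ∀ n, Integrable (fun x => F (u n x - v x)) μ)
    (hv_int : Integrable (fun x => F (v x)) μ) {ε : ℝ} (hε : 0 < ε) :
    ∀ᶠ n in atTop, ∫ x, |F (u n x) - F (u n x - v x) - F (v x)| ∂μ
      ≤ ε + ε * ∫ x, F (u n x - v x) ∂μ := by
  obtain ⟨C, hC0, hC⟩ := hF.abs_add_sub_le ε hε
  set D : ℕ → α → ℝ := fun n x => F (u n x) - F (u n x - v x) - F (v x)
  -- The part of `|D n|` not absorbed by `ε F (u n - v)` is dominated by a multiple of `F v`.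
  set W : ℕ → α → ℝ := fun n x => max (|D n x| - ε * F (u n x - v x)) 0
  have hD_le : ∀ n x, |D n x| ≤ ε * F (u n x - v x) + (C + 1) * F (v x) := fun n x => by
    have h := hC (u n x - v x) (v x)
    rw [sub_add_cancel] at h
    have := abs_sub (F (u n x) - F (u n x - v x)) (F (v x))
    rw [abs_of_nonneg (hF.nonneg (v x))] at this
    linarith
  have hD_int : ∀ n, Integrable (D n) μ := fun n => ((hu_int n).sub (hw_int n)).sub hv_int
  have hW_int : ∀ n, Integrable (W n) μ := fun n =>
    ((hD_int n).abs.sub ((hw_int n).const_mul ε)).pos_part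
  have hW_lim : ∀ᵐ x ∂μ, Tendsto (fun n => W n x) atTop (nhds 0) := by
    filter_upwards [hae] with x hx
    have hu := (hF.continuous.tendsto (v x)).comp hx
    have hw : Tendsto (fun n => F (u n x - v x)) atTop (nhds 0) := by
      have := (hF.continuous.tendsto 0).comp (tendsto_sub_nhds_zero_iff.2 hx)
      rwa [hF.map_zero] at this
    simpa using (((hu.sub hw).sub_const (F (v x))).abs.sub (hw.const_mul ε)).max
      (tendsto_const_nhds (x := (0 : ℝ)))
  have hW_le : ∀ n, ∀ᵐ x ∂μ, ‖W n x‖ ≤ (C + 1) * F (v x) := fun n => ae_of_all _ fun x => by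
    rw [Real.norm_of_nonneg (le_max_right _ _)]
    exact max_le (by linarith [hD_le n x]) (mul_nonneg (by linarith) (hF.nonneg _))
  have hW_integral : Tendsto (fun n => ∫ x, W n x ∂μ) atTop (nhds 0) := by
    simpa using tendsto_integral_of_dominated_convergence _ (fun n => (hW_int n).1)
      (hv_int.const_mul _) hW_le hW_lim
  filter_upwards [hW_integral.eventually (ge_mem_nhds hε)] with n hn
  calc ∫ x, |D n x| ∂μ ≤ ∫ x, (W n x + ε * F (u n x - v x)) ∂μ :=
        integral_mono (hD_int n).abs ((hW_int n).add ((hw_int n).const_mul ε))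
          fun x => by linarith [le_max_left (|D n x| - ε * F (u n x - v x)) 0]
    _ = ∫ x, W n x ∂μ + ε * ∫ x, F (u n x - v x) ∂μ := by
        rw [integral_add (hW_int n) ((hw_int n).const_mul ε), integral_const_mul]
    _ ≤ ε + ε * ∫ x, F (u n x - v x) ∂μ := by linarith

theorem tendsto_integral_sub (hF : BrezisLiebCondition F) {u : ℕ → α → ℝ} {v : α → ℝ}
    (hu : ∀ n, AEMeasurable (u n) μ)
    (hae : ∀ᵐ x ∂μ, Tendsto (fun n => u n x) atTop (nhds (v x)))
    (hint : ∀ n, Integrable (fun x => F (u n x)) μ)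
    (hbdd : ∃ C : ℝ, ∀ n, ∫ x, F (u n x) ∂μ ≤ C) :
    Integrable (fun x => F (v x)) μ ∧
      Tendsto (fun n => (∫ x, F (u n x) ∂μ) - ∫ x, F (u n x - v x) ∂μ) atTop
        (nhds (∫ x, F (v x) ∂μ)) := by
  obtain ⟨C, hC⟩ := hbdd
  have hv_int : Integrable (fun x => F (v x)) μ :=
    integrable_of_tendsto_of_integral_le hint (fun n => ae_of_all _ fun x => hF.nonneg _) hC
      (hae.mono fun x hx => (hF.continuous.tendsto (v x)).comp hx)
  obtain ⟨K, hK⟩ := hF.exists_map_sub_le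
  have hw_int : ∀ n, Integrable (fun x => F (u n x - v x)) μ := fun n =>
    (((hint n).const_mul 2).add (hv_int.const_mul K)).mono'
      (hF.continuous.measurable.comp_aemeasurable
        ((hu n).sub (aemeasurable_of_tendsto_metrizable_ae' hu hae))).aestronglyMeasurable
      (ae_of_all _ fun x => (Real.norm_of_nonneg (hF.nonneg _)).trans_le (hK _ _))
  set M := 2 * C + K * ∫ x, F (v x) ∂μ
  have hw_le : ∀ n, ∫ x, F (u n x - v x) ∂μ ≤ M := fun n => by
    have hdom : Integrable (fun x => 2 * F (u n x) + K * F (v x)) μ :=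
      ((hint n).const_mul 2).add (hv_int.const_mul K)
    refine (integral_mono (hw_int n) hdom fun x => hK _ _).trans ?_
    rw [integral_add ((hint n).const_mul 2) (hv_int.const_mul K), integral_const_mul,
      integral_const_mul]
    linarith [hC n]
  have hM : 0 ≤ M := (integral_nonneg fun x => hF.nonneg _).trans (hw_le 0)
  refine ⟨hv_int, Metric.tendsto_nhds.2 fun δ hδ => ?_⟩
  have hε : 0 < δ / (2 * (M + 1)) := by positivity
  filter_upwards [hF.eventually_integral_abs_sub_le hae hint hw_int hv_int hε] with n hn
  have hsplit : ∫ x, (F (u n x) - F (u n x - v x) - F (v x)) ∂μ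
      = (∫ x, F (u n x) ∂μ) - (∫ x, F (u n x - v x) ∂μ) - ∫ x, F (v x) ∂μ := by
    have hdiff : Integrable (fun x => F (u n x) - F (u n x - v x)) μ := (hint n).sub (hw_int n)
    rw [integral_sub hdiff hv_int, integral_sub (hint n) (hw_int n)]
  rw [Real.dist_eq, ← hsplit]
  calc |∫ x, (F (u n x) - F (u n x - v x) - F (v x)) ∂μ|
      ≤ ∫ x, |F (u n x) - F (u n x - v x) - F (v x)| ∂μ := abs_integral_le_integral_abs
    _ ≤ δ / (2 * (M + 1)) * (M + 1) := by nlinarith [hw_le n]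
    _ < δ := by field_simp; linarith

end BrezisLiebCondition

end BrezisLieb

section F1

variable {δ₀ : ℝ}

theorem log_sq_lt_neg_three {s : ℝ} (hs : 0 < s) (h : s < exp (-(3 / 2))) :
    log (s ^ 2) < -3 := by
  have := log_lt_log hs h
  rw [log_exp] at this
  rw [log_pow]
  push_cast
  linarith

theorem F1_zero : F1 δ₀ 0 = 0 := by simp [F1]

theorem F1_neg (s : ℝ) : F1 δ₀ (-s) = F1 δ₀ s := by
  simp only [F1, neg_eq_zero, abs_neg, neg_sq]

theorem F1_of_lt {s : ℝ} (hs : 0 < s) (h : s < δ₀) :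
    F1 δ₀ s = -(1/2) * s^2 * log (s^2) := by
  rw [F1, if_neg hs.ne', if_pos (by rwa [abs_of_pos hs])]

theorem F1_of_le (hδ₀ : 0 < δ₀) {s : ℝ} (h : δ₀ ≤ s) :
    F1 δ₀ s = -(1/2) * s^2 * (log (δ₀^2) + 3) + 2*δ₀*s - δ₀^2/2 := by
  have hs := hδ₀.trans_le h
  rw [F1, if_neg hs.ne', if_neg (by rw [abs_of_pos hs]; exact not_lt.2 h), abs_of_pos hs]

theorem F1'_of_lt {s : ℝ} (hs : 0 < s) (h : s < δ₀) :
    F1' δ₀ s = -(log (s^2) + 1) * s := by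
  rw [F1', if_neg hs.ne', if_pos (by rwa [abs_of_pos hs])]

theorem F1'_of_le (hδ₀ : 0 < δ₀) {s : ℝ} (h : δ₀ ≤ s) :
    F1' δ₀ s = -(log (δ₀^2) + 3) * s + 2*δ₀ := by
  have hs := hδ₀.trans_le h
  rw [F1', if_neg hs.ne', if_neg (by rw [abs_of_pos hs]; exact not_lt.2 h), sign_of_pos hs,
    mul_one]

theorem continuous_F1 (hδ₀ : 0 < δ₀) : Continuous (F1 δ₀) := by
  have h : F1 δ₀ = fun s => if δ₀ ≤ |s|
      then -(1/2) * |s|^2 * (log (δ₀^2) + 3) + 2*δ₀*|s| - δ₀^2/2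
      else -(1/2) * (s^2 * log (s^2)) := by
    funext s
    rcases eq_or_ne s 0 with rfl | hs
    · simp [F1, hδ₀]
    simp only [F1, hs, if_false, sq_abs]
    split_ifs with h1 h2 h2
    · exact absurd h2 (not_le.2 h1)
    · ring
    · ring
    · exact absurd (not_lt.1 h1) h2
  rw [h]
  refine Continuous.if_le (by fun_prop) (continuous_const.mul (continuous_pow 2).mul_log)
    continuous_const continuous_abs fun s hs => ?_
  rw [← sq_abs s, ← hs]
  ring

theorem hasDerivAt_F1 (hδ₀ : 0 < δ₀) {s : ℝ} (hs : 0 < s) :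
    HasDerivAt (F1 δ₀) (F1' δ₀ s) s := by
  set inner : ℝ → ℝ := fun t => -(1/2) * (t^2 * log (t^2))
  set outer : ℝ → ℝ := fun t => -(1/2) * t^2 * (log (δ₀^2) + 3) + 2*δ₀*t - δ₀^2/2
  have h_inner : ∀ t, 0 < t → HasDerivAt inner (-(log (t^2) + 1) * t) t := fun t ht => by
    refine (((hasDerivAt_mul_log (x := t ^ 2) (by positivity)).comp t (hasDerivAt_pow 2 t)).const_mul
      (-(1/2))).congr_deriv ?_
    simp only [Nat.cast_ofNat]
    ring
  have h_outer : ∀ t, HasDerivAt outer (-(log (δ₀^2) + 3) * t + 2*δ₀) t := fun t => by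
    refine (((((hasDerivAt_pow 2 t).const_mul (-(1/2))).mul_const (log (δ₀^2) + 3)).add
      ((hasDerivAt_id t).const_mul (2*δ₀))).sub_const (δ₀^2/2)).congr_deriv ?_
    simp only [Nat.cast_ofNat]
    ring
  have hF_inner : ∀ t, 0 < t → t ≤ δ₀ → F1 δ₀ t = inner t := fun t ht htδ => by
    rcases htδ.lt_or_eq with htδ | rfl
    · rw [F1_of_lt ht htδ]; ring
    · rw [F1_of_le ht le_rfl]; ring
  have hF_outer : ∀ t, δ₀ ≤ t → F1 δ₀ t = outer t := fun t ht => F1_of_le hδ₀ ht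
  rcases lt_trichotomy s δ₀ with h | rfl | h
  · rw [F1'_of_lt hs h]
    refine (h_inner s hs).congr_of_eventuallyEq ?_
    filter_upwards [Ioo_mem_nhds hs h] with t ht using hF_inner t ht.1 ht.2.le
  · have hL : HasDerivWithinAt (F1 s) (F1' s s) (Iic s) s := by
      refine ((h_inner s hs).congr_deriv ?_).hasDerivWithinAt.congr_of_eventuallyEq ?_
        (hF_inner s hs le_rfl)
      · rw [F1'_of_le hs le_rfl]; ring
      · filter_upwards [self_mem_nhdsWithin, nhdsWithin_le_nhds (Ioi_mem_nhds hs)]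
          with t ht1 ht2 using hF_inner t ht2 ht1
    have hR : HasDerivWithinAt (F1 s) (F1' s s) (Ici s) s := by
      rw [F1'_of_le hs le_rfl]
      exact (h_outer s).hasDerivWithinAt.congr_of_eventuallyEq
        (eventually_nhdsWithin_of_forall fun t ht => hF_outer t ht) (hF_outer s le_rfl)
    simpa only [Iic_union_Ici, hasDerivWithinAt_univ] using hL.union hR
  · rw [F1'_of_le hδ₀ h.le]
    refine (h_outer s).congr_of_eventuallyEq ?_
    filter_upwards [Ioi_mem_nhds h] with t ht using hF_outer t (le_of_lt ht)

theorem F1_bounds_of_pos (hδ₀ : 0 < δ₀) (hδ₀' : δ₀ < exp (-(3 / 2))) {s : ℝ} (hs : 0 < s) :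
    0 ≤ F1 δ₀ s ∧ F1 δ₀ s ≤ s * F1' δ₀ s ∧ s * F1' δ₀ s ≤ 3 * F1 δ₀ s := by
  rcases lt_or_ge s δ₀ with h | h
  · rw [F1_of_lt hs h, F1'_of_lt hs h]
    have hL := log_sq_lt_neg_three hs (h.trans hδ₀')
    have hs2 := sq_nonneg s
    refine ⟨by nlinarith, by nlinarith, by nlinarith⟩
  · rw [F1_of_le hδ₀ h, F1'_of_le hδ₀ h]
    have hD := log_sq_lt_neg_three hδ₀ hδ₀'
    have hs2 := sq_nonneg s
    refine ⟨by nlinarith, by nlinarith, by nlinarith⟩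

theorem powerLikeGrowth_F1 (hδ₀ : 0 < δ₀) (hδ₀' : δ₀ < exp (-(3 / 2))) :
    PowerLikeGrowth (F1 δ₀) (F1' δ₀) 3 where
  continuous := continuous_F1 hδ₀
  even := F1_neg
  nonneg s := by
    rcases lt_trichotomy s 0 with h | rfl | h
    · rw [← F1_neg]; exact (F1_bounds_of_pos hδ₀ hδ₀' (neg_pos.2 h)).1
    · rw [F1_zero]
    · exact (F1_bounds_of_pos hδ₀ hδ₀' h).1
  hasDerivAt _ := hasDerivAt_F1 hδ₀
  le_mul_deriv _ hs := (F1_bounds_of_pos hδ₀ hδ₀' hs).2.1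
  mul_deriv_le _ hs := by exact_mod_cast (F1_bounds_of_pos hδ₀ hδ₀' hs).2.2

end F1

theorem stmt_19_general (δ₀ : ℝ) (hδ₀ : 0 < δ₀) (hδ₀' : δ₀ < Real.exp (-(3/2)))
    (u : ℕ → EuclideanSpace ℝ (Fin 3) → ℝ) (v : EuclideanSpace ℝ (Fin 3) → ℝ)
    (hu : ∀ n, Measurable (u n))
    (hae : ∀ᵐ x : EuclideanSpace ℝ (Fin 3) ∂volume,
      Tendsto (fun n => u n x) atTop (nhds (v x)))
    (hint : ∀ n, Integrable (fun x => F1 δ₀ (u n x)) volume)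
    (hbdd : ∃ C : ℝ, ∀ n, ∫ x, F1 δ₀ (u n x) ∂volume ≤ C) :
    Integrable (fun x => F1 δ₀ (v x)) volume ∧
      Tendsto
        (fun n => (∫ x, F1 δ₀ (u n x) ∂volume) - ∫ x, F1 δ₀ (u n x - v x) ∂volume)
        atTop (nhds (∫ x, F1 δ₀ (v x) ∂volume)) :=
  ((powerLikeGrowth_F1 hδ₀ hδ₀').brezisLiebCondition F1_zero).tendsto_integral_sub
    (fun n => (hu n).aemeasurable) hae hint hbdd

theorem stmt_19 (δ₀ : ℝ) (hδ₀ : 0 < δ₀) (hδ₀' : δ₀ < Real.exp (-(3/2)))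
    (u : ℕ → EuclideanSpace ℝ (Fin 3) → ℝ) (v : EuclideanSpace ℝ (Fin 3) → ℝ)
    (hu : ∀ n, Measurable (u n)) (hv : Measurable v)
    (hae : ∀ᵐ x : EuclideanSpace ℝ (Fin 3) ∂volume,
      Tendsto (fun n => u n x) atTop (nhds (v x)))
    (hint : ∀ n, Integrable (fun x => F1 δ₀ (u n x)) volume)
    (hbdd : ∃ C : ℝ, ∀ n, ∫ x, F1 δ₀ (u n x) ∂volume ≤ C) :
    Integrable (fun x => F1 δ₀ (v x)) volume ∧
      Tendsto
        (fun n => (∫ x, F1 δ₀ (u n x) ∂volume) - ∫ x, F1 δ₀ (u n x - v x) ∂volume)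
        atTop (nhds (∫ x, F1 δ₀ (v x) ∂volume)) :=
  stmt_19_general δ₀ hδ₀ hδ₀' u v hu hae hint hbdd
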